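/- Let V be a finite set and let {(K_t, π_t)}_{t≥1} be a non-decreasing finite environment on V with π_1(V) ≥ 1. Let T ≥ 1 and C, D > 0 be such that for every 1 ≤ t ≤ T the pair (Q_t, π̃_t) satisfies the Nash inequality N(C, D, T). Then for all 0 ≤ r ≤ t ≤ T and every f : V → ℝ, ‖K_{r,t} f − π̃_r(K_{r,t} f)‖_{ℓ^∞} ≤ 2·(4CB/(t − r + 1))^D · sqrt(π_t(V)) · ‖f‖_{ℓ²(π̃_t)}, where B := (1 + 1/T)(1 + ⌈4D⌉). -/

import Mathlib

open scoped BigOperators Classical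
open Filter

noncomputable section

variable {V : Type*}

/-- Action of a kernel on functions: `(Kf)(x) = ∑_y K(x,y) f(y)`. -/
def act (K : V → V → ℝ) (f : V → ℝ) : V → ℝ := fun x => ∑' y, K x y * f y

/-- Action of a kernel on measures: `(μK)(y) = ∑_x μ(x) K(x,y)`. -/
def actMeas (K : V → V → ℝ) (μ : V → ℝ) : V → ℝ := fun y => ∑' x, μ x * K x y

/-- `K` is a Markov transition operator. -/
def IsMarkov (K : V → V → ℝ) : Prop :=
  (∀ x y, 0 ≤ K x y) ∧ (∀ x y, K x y ≤ 1) ∧ (∀ x, HasSum (K x) 1)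

/-- Total mass `π(V)` of a measure. -/
def mass (π : V → ℝ) : ℝ := ∑' x, π x

/-- Normalized probability measure `π̃ = π / π(V)`. -/
def nmz (π : V → ℝ) : V → ℝ := fun x => π x / mass π

/-- `π(f) = ∑_x π(x) f(x)`. -/
def integral (p : V → ℝ) (f : V → ℝ) : ℝ := ∑' x, p x * f x

/-- Variance of `f` with respect to a probability measure `p`. -/
def var (p : V → ℝ) (f : V → ℝ) : ℝ :=
  (∑' x, p x * f x ^ 2) - (∑' x, p x * f x) ^ 2

/-- Membership in `ℓ²(π)`. -/
def MemL2 (π : V → ℝ) (f : V → ℝ) : Prop := Summable (fun x => π x * f x ^ 2)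

/-- Adjoint kernel of `K` in `ℓ²(p)`: `K^*(x,y) = p(y) K(y,x)/p(x)`. -/
def adjKer (p : V → ℝ) (K : V → V → ℝ) : V → V → ℝ := fun x y => p y * K y x / p x

/-- Composition of kernels. -/
def kmul (A B : V → V → ℝ) : V → V → ℝ := fun x y => ∑' z, A x z * B z y

/-- Multiplicative symmetrisation `Q = K^* K`. -/
def Qker (p : V → ℝ) (K : V → V → ℝ) : V → V → ℝ := kmul (adjKer p K) K

/-- Dirichlet form `E_{Q,p}(f,f) = (1/2) ∑_{x,y} (f(x)-f(y))² p(x) Q(x,y)`. -/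
def dirichlet (Q : V → V → ℝ) (p : V → ℝ) (f : V → ℝ) : ℝ :=
  (1 / 2) * ∑' x, ∑' y, (f x - f y) ^ 2 * p x * Q x y

/-- The Poincaré constant of `Q` with respect to the probability measure `p`:
the largest `γ ≥ 0` with `γ Var_p f ≤ E_{Q,p}(f,f)` for all `f ∈ ℓ²(p)`. -/
def poincareConst (Q : V → V → ℝ) (p : V → ℝ) : ℝ :=
  sSup {γ : ℝ | 0 ≤ γ ∧ ∀ f : V → ℝ, MemL2 p f → γ * var p f ≤ dirichlet Q p f}

/-- Non-decreasing finite environment `{(K_t, π_t)}_{t ≥ 1}`. -/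
def NonDecEnv (K : ℕ → V → V → ℝ) (π : ℕ → V → ℝ) : Prop :=
  (∀ t, 1 ≤ t → IsMarkov (K t)) ∧
  (∀ t, 1 ≤ t → ∀ x, 0 < π t x) ∧
  (∀ t, 1 ≤ t → Summable (π t)) ∧
  (∀ t, 1 ≤ t → ∀ y, HasSum (fun x => π t x * K t x y) (π t y)) ∧
  (∀ t, 1 ≤ t → ∀ x, π t x ≤ π (t + 1) x)

/-- `K_{s,t} f = K_{s+1} (K_{s+2} ( ⋯ (K_t f)))`. -/
def Kst (K : ℕ → V → V → ℝ) (s t : ℕ) (f : V → ℝ) : V → ℝ :=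
  (List.range (t - s)).foldr (fun i g => act (K (s + 1 + i)) g) f

/-- Dirac mass at `x`. -/
def delta (x : V) : V → ℝ := fun y => if y = x then (1:ℝ) else 0

/-- The law `μ K_1 ⋯ K_t` of the chain at time `t` with initial law `μ`. -/
def law (K : ℕ → V → V → ℝ) (t : ℕ) (μ : V → ℝ) : V → ℝ :=
  (List.range t).foldl (fun ν i => actMeas (K (i + 1)) ν) μ

/-- Total variation distance. -/
def dTV (μ ν : V → ℝ) : ℝ := (1 / 2) * ∑' x, |μ x - ν x|

end

noncomputable section

/-- `ℓ¹(p)`-norm. -/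
def l1norm {V : Type*} (p : V → ℝ) (f : V → ℝ) : ℝ := ∑' x, p x * |f x|

/-- `ℓ²(p)`-norm. -/
def l2norm {V : Type*} (p : V → ℝ) (f : V → ℝ) : ℝ := Real.sqrt (∑' x, p x * f x ^ 2)

/-- The Nash inequality `N(C, D, T)` for the pair `(Q, p)`:
`‖f‖_{ℓ²(p)}^{2+1/D} ≤ C (E_{Q,p}(f,f) + (1/T)‖f‖²_{ℓ²(p)}) ‖f‖_{ℓ¹(p)}^{1/D}`. -/
def NashIneq {V : Type*} (Q : V → V → ℝ) (p : V → ℝ) (C D T : ℝ) : Prop :=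
  ∀ f : V → ℝ,
    l2norm p f ^ ((2 : ℝ) + 1 / D) ≤
      C * (dirichlet Q p f + (1 / T) * l2norm p f ^ (2 : ℕ)) * l1norm p f ^ ((1 : ℝ) / D)

end



lemma exp_le_one_add_two_mul {y : ℝ} (hy0 : 0 ≤ y) (hy : y ≤ 1/2) :
    Real.exp y ≤ 1 + 2*y := by
  have h1 : 1 - y ≤ Real.exp (-y) := by
    have := Real.add_one_le_exp (-y); linarith
  have h2 : 0 < 1 - y := by linarith
  have h3 : Real.exp y ≤ 1 / (1 - y) := by
    rw [le_div_iff₀ h2]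
    have : Real.exp y * (1 - y) ≤ Real.exp y * Real.exp (-y) := by
      apply mul_le_mul_of_nonneg_left h1 (Real.exp_nonneg y)
    rw [← Real.exp_add] at this; simpa using this
  refine h3.trans ?_
  rw [div_le_iff₀ h2]
  nlinarith

lemma core_ineq (D m Tr x : ℝ) (hD : 0 < D) (hm : 4*D ≤ m) (hT : 1 ≤ Tr)
    (hx : 3 + 4*m ≤ x) (hxT : x ≤ Tr) :
    (1+1/x)^(2*D:ℝ) ≤ 1 - 1/Tr + 4*(1+1/Tr)*(1+m)/(x+1) := by
  have hm0 : 0 < m := by linarith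
  have hx0 : (0:ℝ) < x := by linarith
  have hTr0 : (0:ℝ) < Tr := by linarith
  have hy : 2*D/x ≤ 1/2 := by
    rw [div_le_iff₀ hx0]; nlinarith
  have hy0 : 0 ≤ 2*D/x := by positivity
  have h1 : (1+1/x)^(2*D:ℝ) ≤ Real.exp (2*D/x) := by
    calc (1+1/x)^(2*D:ℝ) ≤ (Real.exp (1/x))^(2*D:ℝ) := by
          apply Real.rpow_le_rpow (by positivity) ?_ (by positivity)
          have := Real.add_one_le_exp (1/x); linarith
      _ = Real.exp (2*D/x) := by rw [← Real.exp_mul]; ring_nf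
  have h2 : Real.exp (2*D/x) ≤ 1 + 4*D/x := by
    have h := exp_le_one_add_two_mul hy0 hy
    have he : 2*(2*D/x) = 4*D/x := by ring
    linarith [he ▸ h]
  have h3 : 4*D/x ≤ 8*D/(x+1) := by
    rw [div_le_div_iff₀ hx0 (by linarith)]; nlinarith
  have h4 : 1/Tr ≤ (1+1/Tr)/(x+1) := by
    rw [div_le_div_iff₀ hTr0 (by linarith)]
    have h' : (1 + 1/Tr) * Tr = Tr + 1 := by field_simp
    linarith
  have h5 : 8*D/(x+1) + (1+1/Tr)/(x+1) ≤ 4*(1+1/Tr)*(1+m)/(x+1) := by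
    rw [← add_div, div_le_div_iff₀ (by linarith) (by linarith)]
    have hu0 : (0:ℝ) ≤ 1/Tr := by positivity
    have key : 8*D + (1 + 1/Tr) ≤ 4*(1+1/Tr)*(1+m) := by nlinarith [mul_nonneg hu0 hm0.le]
    nlinarith [key, hx0]
  calc (1+1/x)^(2*D:ℝ) ≤ 1 + 4*D/x := h1.trans h2
    _ ≤ 1 + 8*D/(x+1) := by linarith
    _ ≤ 1 - 1/Tr + 4*(1+1/Tr)*(1+m)/(x+1) := by linarith

lemma nash_iter (Tr C D L m : ℝ) (hT : 1 ≤ Tr) (hC : 0 < C) (hD : 0 < D) (hL : 0 < L)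
    (hm1 : 1 ≤ m) (hm4 : 4*D ≤ m)
    (s : ℕ) (hs : (s:ℝ) ≤ Tr) (a : ℕ → ℝ)
    (h0 : a 0 ≤ (C*(1+1/Tr))^(2*D:ℝ) * L^(2:ℝ) / 2)
    (hmono : ∀ j, j < s → a (j+1) ≤ a j)
    (hrec : ∀ j, j < s → a (j+1) * (1 - 1/Tr) + (a (j+1))^((1:ℝ)+1/(2*D)) / (C * L^((1:ℝ)/D)) ≤ a j) :
    a s ≤ (4*C*((1+1/Tr)*(1+m)) / ((s:ℝ)+1))^(2*D:ℝ) * L^(2:ℝ) := by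
  have hTr0 : (0:ℝ) < Tr := by linarith
  have hB : (0:ℝ) < (1+1/Tr)*(1+m) := by positivity
  set B : ℝ := (1+1/Tr)*(1+m) with hBdef
  set A : ℝ := 4*C*B with hAdef
  have hA0 : 0 < A := by positivity
  have hE : (0:ℝ) < C*(1+1/Tr) := by positivity
  set G : ℝ := (C*(1+1/Tr))^(2*D:ℝ) with hGdef
  have hG0 : 0 < G := Real.rpow_pos_of_pos hE _
  have hL2 : (0:ℝ) < L^(2:ℝ) := Real.rpow_pos_of_pos hL _
  set W : ℕ → ℝ := fun j => (A/((j:ℝ)+1))^(2*D:ℝ) * L^(2:ℝ) with hWdef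
  have hW0 : ∀ j : ℕ, 0 < W j := by
    intro j
    have : (0:ℝ) < A/((j:ℝ)+1) := by positivity
    exact mul_pos (Real.rpow_pos_of_pos this _) hL2
  have hchain : ∀ j, j ≤ s → a j ≤ a 0 := by
    intro j hj
    induction j with
    | zero => exact le_rfl
    | succ n ih => exact (hmono n (by omega)).trans (ih (by omega))
  have key : ∀ j, j ≤ s → a j ≤ W j := by
    intro j
    induction j with
    | zero =>
      intro _
      have hAE : C*(1+1/Tr) ≤ A := by
        rw [hAdef, hBdef]; nlinarith [hE]
      have h4 : G ≤ (A/(((0:ℕ):ℝ)+1))^(2*D:ℝ) := by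
        rw [hGdef]
        apply Real.rpow_le_rpow hE.le ?_ (by positivity)
        simpa using hAE
      calc a 0 ≤ G * L^(2:ℝ)/2 := h0
        _ ≤ G * L^(2:ℝ) := by linarith [mul_pos hG0 hL2]
        _ ≤ W 0 := by
            rw [hWdef]
            exact mul_le_mul_of_nonneg_right h4 hL2.le
    | succ n ih =>
      intro hn1
      have hns : n < s := by omega
      have ihn : a n ≤ W n := ih (by omega)
      by_cases hcase : ((n:ℝ)+1)+1 ≤ 4*(1+m)
      · have h1 : a (n+1) ≤ a 0 := hchain (n+1) hn1
        have h2 : a 0 ≤ G * L^(2:ℝ) := by linarith [mul_pos hG0 hL2]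
        have h3 : C*(1+1/Tr) ≤ A/(((n+1:ℕ):ℝ)+1) := by
          rw [le_div_iff₀ (by push_cast; positivity)]
          push_cast
          rw [hAdef, hBdef]
          nlinarith [hE]
        have h4 : G ≤ (A/(((n+1:ℕ):ℝ)+1))^(2*D:ℝ) := by
          rw [hGdef]
          exact Real.rpow_le_rpow hE.le h3 (by positivity)
        calc a (n+1) ≤ G * L^(2:ℝ) := h1.trans h2
          _ ≤ W (n+1) := by
              rw [hWdef]
              exact mul_le_mul_of_nonneg_right h4 hL2.le
      · push_neg at hcase
        by_contra hcon
        push_neg at hcon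
        set x : ℝ := (n:ℝ)+1 with hxdef
        have hx0 : (0:ℝ) < x := by positivity
        have hx3 : 3 + 4*m ≤ x := by rw [hxdef]; linarith
        have hxT : x ≤ Tr := by
          have : ((n:ℝ)+1) ≤ (s:ℝ) := by exact_mod_cast Nat.succ_le_of_lt hns
          rw [hxdef]; linarith
        have hcore := core_ineq D m Tr x hD hm4 hT hx3 hxT
        have hXpos : (0:ℝ) < A/(x+1) := by positivity
        have hWsucc : W (n+1) = (A/(x+1))^(2*D:ℝ) * L^(2:ℝ) := by
          rw [hWdef, hxdef]; push_cast; ring_nf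
        have hep : (2*D) * ((1:ℝ)+1/(2*D)) = 2*D + 1 := by field_simp
        have hep2 : (2:ℝ) * ((1:ℝ)+1/(2*D)) = 2 + 1/D := by field_simp
        have hpow : (W (n+1))^((1:ℝ)+1/(2*D)) / (C * L^((1:ℝ)/D))
            = W (n+1) * (4*B/(x+1)) := by
          rw [hWsucc]
          rw [Real.mul_rpow (Real.rpow_nonneg hXpos.le _) (Real.rpow_nonneg hL.le _)]
          rw [← Real.rpow_mul hXpos.le, ← Real.rpow_mul hL.le, hep, hep2]
          rw [Real.rpow_add hXpos, Real.rpow_add hL, Real.rpow_one]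
          have hLD : L^((1:ℝ)/D) ≠ 0 := ne_of_gt (Real.rpow_pos_of_pos hL _)
          rw [hAdef]
          field_simp
        have h1T : (0:ℝ) ≤ 1 - 1/Tr := by
          have : 1/Tr ≤ 1 := by rw [div_le_one hTr0]; exact hT
          linarith
        have hCL : (0:ℝ) < C * L^((1:ℝ)/D) := by positivity
        have hstep1 : W (n+1) * (1 - 1/Tr) + (W (n+1))^((1:ℝ)+1/(2*D)) / (C * L^((1:ℝ)/D))
            < a (n+1) * (1 - 1/Tr) + (a (n+1))^((1:ℝ)+1/(2*D)) / (C * L^((1:ℝ)/D)) := by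
          have t1 : W (n+1) * (1 - 1/Tr) ≤ a (n+1) * (1 - 1/Tr) :=
            mul_le_mul_of_nonneg_right hcon.le h1T
          have hr : (W (n+1))^((1:ℝ)+1/(2*D)) < (a (n+1))^((1:ℝ)+1/(2*D)) :=
            Real.rpow_lt_rpow (hW0 (n+1)).le hcon (by positivity)
          have t2 : (W (n+1))^((1:ℝ)+1/(2*D)) / (C * L^((1:ℝ)/D))
              < (a (n+1))^((1:ℝ)+1/(2*D)) / (C * L^((1:ℝ)/D)) :=
            div_lt_div_of_pos_right hr hCL
          linarith
        have hWn : W n = W (n+1) * ((1+1/x)^(2*D:ℝ)) := by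
          rw [hWsucc]
          show (A/((n:ℝ)+1))^(2*D:ℝ) * L^(2:ℝ) = _
          have hAx : A/x = (A/(x+1)) * (1+1/x) := by
            field_simp
          have hnx : ((n:ℝ)+1) = x := rfl
          rw [hnx, hAx, Real.mul_rpow hXpos.le (by positivity)]
          ring
        have hstep2 : W n ≤ W (n+1) * (1 - 1/Tr) + W (n+1) * (4*B/(x+1)) := by
          rw [hWn]
          calc W (n+1) * ((1+1/x)^(2*D:ℝ))
              ≤ W (n+1) * (1 - 1/Tr + 4*(1+1/Tr)*(1+m)/(x+1)) :=
                mul_le_mul_of_nonneg_left hcore (hW0 (n+1)).le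
            _ = W (n+1) * (1 - 1/Tr) + W (n+1) * (4*B/(x+1)) := by rw [hBdef]; ring
        have hfalse : W n < W n := by
          calc W n ≤ W (n+1) * (1 - 1/Tr) + W (n+1) * (4*B/(x+1)) := hstep2
            _ = W (n+1) * (1 - 1/Tr) + (W (n+1))^((1:ℝ)+1/(2*D)) / (C * L^((1:ℝ)/D)) := by
                rw [hpow]
            _ < a (n+1) * (1 - 1/Tr) + (a (n+1))^((1:ℝ)+1/(2*D)) / (C * L^((1:ℝ)/D)) := hstep1
            _ ≤ a n := hrec n hns
            _ ≤ W n := ihn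
        exact absurd hfalse (lt_irrefl _)
  have := key s (le_refl s)
  rw [hWdef] at this
  exact this


section AuxKernel
open Finset
variable {V : Type*} [Fintype V]

lemma markov_row_sum {k : V → V → ℝ} (hk : IsMarkov k) (x : V) :
    ∑ y, k x y = 1 := by
  have := (hk.2.2 x).tsum_eq
  rwa [tsum_fintype] at this

lemma act_eq (k : V → V → ℝ) (f : V → ℝ) (x : V) :
    act k f x = ∑ y, k x y * f y := tsum_fintype _

lemma actMeas_eq (k : V → V → ℝ) (μ : V → ℝ) (y : V) :
    actMeas k μ y = ∑ x, μ x * k x y := tsum_fintype _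

lemma fubini_pair (k : V → V → ℝ) (σ ψ : V → ℝ) :
    ∑ y, actMeas k σ y * ψ y = ∑ z, σ z * act k ψ z := by
  simp_rw [actMeas_eq, act_eq, Finset.sum_mul, Finset.mul_sum, ← mul_assoc]
  exact Finset.sum_comm

lemma l1_contraction {k : V → V → ℝ} (hk : IsMarkov k) (σ : V → ℝ) :
    ∑ y, |actMeas k σ y| ≤ ∑ z, |σ z| := by
  calc ∑ y, |actMeas k σ y| ≤ ∑ y, ∑ z, |σ z| * k z y := by
        apply Finset.sum_le_sum
        intro y _
        rw [actMeas_eq]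
        refine (Finset.abs_sum_le_sum_abs _ _).trans ?_
        apply Finset.sum_le_sum
        intro z _
        rw [abs_mul, abs_of_nonneg (hk.1 z y)]
    _ = ∑ z, |σ z| := by
        rw [Finset.sum_comm]
        apply Finset.sum_congr rfl
        intro z _
        rw [← Finset.mul_sum, markov_row_sum hk, mul_one]

lemma l2_contraction {k : V → V → ℝ} (hk : IsMarkov k) {w : V → ℝ}
    (hw : ∀ x, 0 ≤ w x) (hstat : ∀ y, ∑ x, w x * k x y = w y) (g : V → ℝ) :
    ∑ x, w x * (act k g x)^2 ≤ ∑ x, w x * g x^2 := by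
  have pt : ∀ x, (act k g x)^2 ≤ ∑ y, k x y * g y^2 := by
    intro x
    rw [act_eq]
    have cs := Finset.sum_mul_sq_le_sq_mul_sq Finset.univ
      (fun y => Real.sqrt (k x y)) (fun y => Real.sqrt (k x y) * g y)
    have e1 : ∀ y : V, Real.sqrt (k x y) * (Real.sqrt (k x y) * g y) = k x y * g y := by
      intro y
      rw [← mul_assoc, Real.mul_self_sqrt (hk.1 x y)]
    have e2 : ∀ y : V, Real.sqrt (k x y) ^ 2 = k x y := fun y => Real.sq_sqrt (hk.1 x y)
    have e3 : ∀ y : V, (Real.sqrt (k x y) * g y)^2 = k x y * g y^2 := by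
      intro y
      rw [mul_pow, e2]
    simp only [e1, e2, e3] at cs
    rwa [markov_row_sum hk, one_mul] at cs
  calc ∑ x, w x * (act k g x)^2 ≤ ∑ x, w x * ∑ y, k x y * g y^2 := by
        apply Finset.sum_le_sum
        intro x _
        exact mul_le_mul_of_nonneg_left (pt x) (hw x)
    _ = ∑ y, (∑ x, w x * k x y) * g y ^2 := by
        simp_rw [Finset.mul_sum, Finset.sum_mul, ← mul_assoc]
        exact Finset.sum_comm
    _ = ∑ x, w x * g x^2 := by
        apply Finset.sum_congr rfl
        intro y _
        rw [hstat]

lemma dirichlet_eq {k : V → V → ℝ} (hk : IsMarkov k) {p : V → ℝ}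
    (hp : ∀ x, 0 < p x) (hstat : ∀ y, ∑ x, p x * k x y = p y) (ψ : V → ℝ) :
    dirichlet (Qker p k) p ψ = (∑ x, p x * ψ x^2) - ∑ x, p x * (act k ψ x)^2 := by
  have step1 : dirichlet (Qker p k) p ψ
      = (1/2) * ∑ x, ∑ y, ∑ z, (ψ x - ψ y)^2 * (p z * k z x * k z y) := by
    simp only [dirichlet, Qker, kmul, adjKer, tsum_fintype]
    congr 1
    apply Finset.sum_congr rfl; intro x _
    apply Finset.sum_congr rfl; intro y _
    rw [Finset.mul_sum]
    apply Finset.sum_congr rfl; intro z _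
    have hpx : p x ≠ 0 := (hp x).ne'
    field_simp
  have swap : ∑ x, ∑ y, ∑ z, (ψ x - ψ y)^2 * (p z * k z x * k z y)
      = ∑ z, p z * (∑ x, ∑ y, (ψ x - ψ y)^2 * (k z x * k z y)) := by
    calc ∑ x, ∑ y, ∑ z, (ψ x - ψ y)^2 * (p z * k z x * k z y)
        = ∑ x, ∑ z, ∑ y, (ψ x - ψ y)^2 * (p z * k z x * k z y) :=
          Finset.sum_congr rfl (fun x _ => Finset.sum_comm)
      _ = ∑ z, ∑ x, ∑ y, (ψ x - ψ y)^2 * (p z * k z x * k z y) := Finset.sum_comm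
      _ = ∑ z, p z * (∑ x, ∑ y, (ψ x - ψ y)^2 * (k z x * k z y)) := by
          apply Finset.sum_congr rfl; intro z _
          rw [Finset.mul_sum]
          apply Finset.sum_congr rfl; intro x _
          rw [Finset.mul_sum]
          apply Finset.sum_congr rfl; intro y _
          ring
  have inner : ∀ z, ∑ x, ∑ y, (ψ x - ψ y)^2 * (k z x * k z y)
      = 2*(∑ x, k z x * ψ x^2) - 2*(act k ψ z)^2 := by
    intro z
    have hrow : ∑ y, k z y = 1 := markov_row_sum hk z
    have expand : ∀ x y : V, (ψ x - ψ y)^2 * (k z x * k z y)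
        = (ψ x^2 * k z x) * k z y + (k z x * (ψ y^2 * k z y))
          - 2*((ψ x * k z x) * (ψ y * k z y)) := by intro x y; ring
    simp_rw [expand, Finset.sum_sub_distrib, Finset.sum_add_distrib]
    have e1 : ∑ x, ∑ y, (ψ x^2 * k z x) * k z y = ∑ x, k z x * ψ x^2 := by
      apply Finset.sum_congr rfl; intro x _
      rw [← Finset.mul_sum, hrow, mul_one, mul_comm]
    have e2 : ∑ x, ∑ y, k z x * (ψ y^2 * k z y) = ∑ y, ψ y^2 * k z y := by
      rw [← Finset.sum_mul_sum]
      rw [hrow, one_mul]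
    have e3 : ∑ x, ∑ y, 2*((ψ x * k z x) * (ψ y * k z y))
        = 2*((∑ x, ψ x * k z x) * (∑ y, ψ y * k z y)) := by
      have hx : ∀ x : V, ∑ y, 2*((ψ x * k z x) * (ψ y * k z y))
          = 2*((ψ x * k z x) * (∑ y, ψ y * k z y)) := by
        intro x; rw [Finset.mul_sum, Finset.mul_sum]
      simp_rw [hx]
      rw [← Finset.mul_sum, ← Finset.sum_mul]
    rw [e1, e2, e3]
    have e4 : act k ψ z = ∑ x, ψ x * k z x := by
      rw [act_eq]
      exact Finset.sum_congr rfl (fun x _ => mul_comm _ _)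
    rw [e4]
    have e5 : ∑ y, ψ y^2 * k z y = ∑ x, k z x * ψ x^2 := by
      exact Finset.sum_congr rfl (fun x _ => mul_comm _ _)
    rw [e5]
    ring
  have final1 : ∑ z, p z * (∑ x, k z x * ψ x^2) = ∑ x, p x * ψ x^2 := by
    simp_rw [Finset.mul_sum, ← mul_assoc]
    rw [Finset.sum_comm]
    apply Finset.sum_congr rfl; intro x _
    rw [← Finset.sum_mul, hstat]
  rw [step1, swap]
  simp_rw [inner]
  have : ∑ z, p z * (2*(∑ x, k z x * ψ x^2) - 2*(act k ψ z)^2)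
      = 2 * ((∑ z, p z * (∑ x, k z x * ψ x^2)) - ∑ z, p z * (act k ψ z)^2) := by
    calc ∑ z, p z * (2*(∑ x, k z x * ψ x^2) - 2*(act k ψ z)^2)
        = ∑ z, (2*(p z * (∑ x, k z x * ψ x^2)) - 2*(p z * (act k ψ z)^2)) :=
          Finset.sum_congr rfl (fun z _ => by ring)
      _ = (∑ z, 2*(p z * (∑ x, k z x * ψ x^2))) - ∑ z, 2*(p z * (act k ψ z)^2) :=
          Finset.sum_sub_distrib _ _
      _ = 2*(∑ z, p z * (∑ x, k z x * ψ x^2)) - 2*(∑ z, p z * (act k ψ z)^2) := by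
          rw [← Finset.mul_sum, ← Finset.mul_sum]
      _ = _ := by ring
  rw [this, final1]
  ring
end AuxKernel

section AuxKst
open Finset
variable {V : Type*} [Fintype V]

omit [Fintype V] in
lemma Kst_self (K : ℕ → V → V → ℝ) (t : ℕ) (f : V → ℝ) : Kst K t t f = f := by
  unfold Kst
  rw [Nat.sub_self]
  rfl

lemma Kst_succ (K : ℕ → V → V → ℝ) {u t : ℕ} (h : u < t) (f : V → ℝ) :
    Kst K u t f = act (K (u+1)) (Kst K (u+1) t f) := by
  unfold Kst
  have h1 : t - u = (t - (u+1)) + 1 := by omega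
  rw [h1, List.range_succ_eq_map]
  rw [List.foldr_cons, List.foldr_map]
  have hfun : (fun (x : ℕ) (y : V → ℝ) => act (K (u + 1 + x.succ)) y)
      = (fun (i : ℕ) (g : V → ℝ) => act (K ((u+1) + 1 + i)) g) := by
    funext i g
    have h2 : u + 1 + i.succ = (u+1) + 1 + i := by omega
    rw [h2]
  rw [hfun, Nat.add_zero]

/-- evolution of a (signed) measure from time `r`. -/
noncomputable def evo (K : ℕ → V → V → ℝ) (r : ℕ) (μ : V → ℝ) : ℕ → V → ℝ
  | 0 => μ
  | (j+1) => actMeas (K (r+1+j)) (evo K r μ j)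

lemma evo_pairing (K : ℕ → V → V → ℝ) (r t : ℕ) (μ : V → ℝ) (f : V → ℝ) :
    ∀ j, r + j ≤ t →
      ∑ y, μ y * Kst K r t f y = ∑ y, evo K r μ j y * Kst K (r+j) t f y := by
  intro j
  induction j with
  | zero => intro _; simp [evo]
  | succ n ih =>
    intro hn
    have h1 : r + n < t := by omega
    rw [ih (by omega)]
    rw [Kst_succ K h1]
    have h2 : r + n + 1 = r + (n+1) := by omega
    rw [← fubini_pair (K (r+n+1)) (evo K r μ n) (Kst K (r+n+1) t f)]
    have h3 : r + 1 + n = r + n + 1 := by omega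
    show _ = ∑ y, actMeas (K (r+1+n)) (evo K r μ n) y * Kst K (r+(n+1)) t f y
    rw [h3, ← h2]

end AuxKst

section AuxMin
open Finset
variable {V : Type*} [Fintype V]

lemma min_bound {k : V → V → ℝ} (hk : IsMarkov k) {p : V → ℝ}
    (hp : ∀ x, 0 < p x) (hp1 : ∑ x, p x = 1)
    (hstat : ∀ y, ∑ x, p x * k x y = p y)
    {C D Tr : ℝ} (hC : 0 < C) (hD : 0 < D) (hTr : 1 ≤ Tr)
    (hN : NashIneq (Qker p k) p C D Tr) (x : V) :
    (C*(1+1/Tr))^(-(2*D):ℝ) ≤ p x := by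
  have hTr0 : (0:ℝ) < Tr := by linarith
  have hpx := hp x
  have hl2 : l2norm p (delta x) = Real.sqrt (p x) := by
    unfold l2norm delta
    rw [tsum_fintype]
    congr 1
    rw [Finset.sum_eq_single x]
    · simp
    · intro b _ hb; simp [hb]
    · intro h; exact absurd (Finset.mem_univ x) h
  have hl1 : l1norm p (delta x) = p x := by
    unfold l1norm delta
    rw [tsum_fintype]
    rw [Finset.sum_eq_single x]
    · simp
    · intro b _ hb; simp [hb]
    · intro h; exact absurd (Finset.mem_univ x) h
  have hdir : dirichlet (Qker p k) p (delta x) ≤ p x := by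
    rw [dirichlet_eq hk hp hstat]
    have h1 : ∑ y, p y * (delta x) y ^2 = p x := by
      unfold delta
      rw [Finset.sum_eq_single x]
      · simp
      · intro b _ hb; simp [hb]
      · intro h; exact absurd (Finset.mem_univ x) h
    have h2 : 0 ≤ ∑ y, p y * (act k (delta x) y)^2 :=
      Finset.sum_nonneg (fun y _ => mul_nonneg (hp y).le (sq_nonneg _))
    linarith
  have key := hN (delta x)
  rw [hl2, hl1] at key
  -- LHS = (p x)^{1 + 1/(2D)}
  have hLHS : Real.sqrt (p x) ^ ((2:ℝ) + 1/D) = (p x) ^ ((1:ℝ) + 1/(2*D)) := by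
    rw [Real.sqrt_eq_rpow, ← Real.rpow_mul hpx.le]
    congr 1
    field_simp
  have hsq : Real.sqrt (p x) ^ (2:ℕ) = p x := Real.sq_sqrt hpx.le
  rw [hLHS, hsq] at key
  have hRHS : C * (dirichlet (Qker p k) p (delta x) + 1/Tr * p x) * (p x) ^ ((1:ℝ)/D)
      ≤ (C*(1+1/Tr)) * (p x) ^ ((1:ℝ) + 1/D) := by
    have hpow : (p x) ^ ((1:ℝ) + 1/D) = p x * (p x) ^ ((1:ℝ)/D) := by
      rw [Real.rpow_add hpx, Real.rpow_one]
    rw [hpow]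
    have h1 : dirichlet (Qker p k) p (delta x) + 1/Tr * p x ≤ (1+1/Tr) * p x := by
      nlinarith [hdir]
    have h2 : (0:ℝ) ≤ (p x) ^ ((1:ℝ)/D) := Real.rpow_nonneg hpx.le _
    calc C * (dirichlet (Qker p k) p (delta x) + 1/Tr * p x) * (p x) ^ ((1:ℝ)/D)
        ≤ C * ((1+1/Tr) * p x) * (p x) ^ ((1:ℝ)/D) := by
          apply mul_le_mul_of_nonneg_right _ h2
          exact mul_le_mul_of_nonneg_left h1 hC.le
      _ = (C*(1+1/Tr)) * (p x * (p x) ^ ((1:ℝ)/D)) := by ring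
  have key2 : (p x) ^ ((1:ℝ) + 1/(2*D)) ≤ (C*(1+1/Tr)) * (p x) ^ ((1:ℝ) + 1/D) :=
    key.trans hRHS
  -- split exponent: 1 + 1/(2D) = (1 + 1/D) + (-(1/(2D)))
  have hsplit : (p x) ^ ((1:ℝ) + 1/(2*D))
      = (p x) ^ ((1:ℝ) + 1/D) * (p x) ^ (-(1/(2*D)):ℝ) := by
    rw [← Real.rpow_add hpx]
    congr 1
    field_simp
    ring
  rw [hsplit] at key2
  have hposp : (0:ℝ) < (p x) ^ ((1:ℝ) + 1/D) := Real.rpow_pos_of_pos hpx _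
  have key3 : (p x) ^ (-(1/(2*D)):ℝ) ≤ C*(1+1/Tr) := by
    have := (mul_le_mul_iff_right₀ hposp).mp (by linarith [key2] : (p x) ^ ((1:ℝ) + 1/D) * (p x) ^ (-(1/(2*D)):ℝ) ≤ (p x) ^ ((1:ℝ) + 1/D) * (C*(1+1/Tr)))
    exact this
  -- raise to power -(2D)
  have hbase : (0:ℝ) < (p x) ^ (-(1/(2*D)):ℝ) := Real.rpow_pos_of_pos hpx _
  have key4 : (C*(1+1/Tr))^(-(2*D):ℝ) ≤ ((p x) ^ (-(1/(2*D)):ℝ))^(-(2*D):ℝ) :=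
    Real.rpow_le_rpow_of_nonpos hbase key3 (by nlinarith)
  rwa [← Real.rpow_mul hpx.le, show (-(1/(2*D)):ℝ) * (-(2*D)) = 1 by field_simp, Real.rpow_one] at key4
end AuxMin

set_option maxHeartbeats 1600000 in
/-- Theorem: `ℓ² → ℓ^∞` bound under Nash inequalities, finite state
space. If `V` is finite, `π_1(V) ≥ 1` and each `(Q_t, π̃_t)`, `1 ≤ t ≤ T`, satisfies
`N(C,D,T)`, then for `0 ≤ r ≤ t ≤ T` and every `f : V → ℝ`,
`‖K_{r,t} f − π̃_r(K_{r,t} f)‖_{ℓ^∞} ≤ 2 (4CB/(t−r+1))^D sqrt(π_t(V)) ‖f‖_{ℓ²(π̃_t)}`,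
with `B = (1 + 1/T)(1 + ⌈4D⌉)` and `π_0 := π_1`. -/
theorem stmt8 {V : Type*} [Fintype V] [Nonempty V]
    (K : ℕ → V → V → ℝ) (π : ℕ → V → ℝ)
    (henv : NonDecEnv K π) (hπ0 : π 0 = π 1) (hmass : 1 ≤ mass (π 1))
    (T : ℕ) (hT : 1 ≤ T) (C D : ℝ) (hC : 0 < C) (hD : 0 < D)
    (hNash : ∀ t, 1 ≤ t → t ≤ T →
      NashIneq (Qker (nmz (π t)) (K t)) (nmz (π t)) C D (T : ℝ))
    (r t : ℕ) (hrt : r ≤ t) (htT : t ≤ T) (f : V → ℝ) :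
    (⨆ x : V, |Kst K r t f x - integral (nmz (π r)) (Kst K r t f)|) ≤
      2 * ((4 * C * ((1 + 1 / (T : ℝ)) * (1 + (⌈(4 : ℝ) * D⌉ : ℝ))) / ((t : ℝ) - r + 1)) ^ D) *
        Real.sqrt (mass (π t)) * l2norm (nmz (π t)) f := by
  classical
  obtain ⟨hMk, hpos, hsum, hstat0, hmono0⟩ := henv
  set Tr : ℝ := (T:ℝ) with hTrdef
  have hTr : (1:ℝ) ≤ Tr := by rw [hTrdef]; exact_mod_cast hT
  have hTr0 : (0:ℝ) < Tr := by linarith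
  set m : ℝ := ((⌈(4:ℝ)*D⌉ : ℤ) : ℝ) with hmdef
  have hm4 : 4*D ≤ m := Int.le_ceil _
  have hm1 : (1:ℝ) ≤ m := by
    have h' : (1:ℤ) ≤ ⌈(4:ℝ)*D⌉ := Int.ceil_pos.mpr (by positivity)
    rw [hmdef]
    exact_mod_cast h'
  -- environment facts
  have hposA : ∀ u (x : V), 0 < π u x := by
    intro u x
    cases u with
    | zero => show 0 < π 0 x; rw [hπ0]; exact hpos 1 le_rfl x
    | succ n => exact hpos (n+1) (by omega) x
  have hmonoA : ∀ u (x : V), π u x ≤ π (u+1) x := by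
    intro u x
    cases u with
    | zero => show π 0 x ≤ π (0+1) x; rw [hπ0]
    | succ n => exact hmono0 (n+1) (by omega) x
  have hleA : ∀ u v, u ≤ v → ∀ x : V, π u x ≤ π v x := by
    intro u v huv
    induction v with
    | zero => intro x; have : u = 0 := by omega
              rw [this]
    | succ n ih =>
      intro x
      rcases Nat.lt_or_ge u (n+1) with h | h
      · exact (ih (by omega) x).trans (hmonoA n x)
      · have : u = n+1 := by omega
        rw [this]
  have hstatF : ∀ u, 1 ≤ u → ∀ y, ∑ x, π u x * K u x y = π u y := by
    intro u hu y
    have := (hstat0 u hu y).tsum_eq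
    rwa [tsum_fintype] at this
  -- masses
  set M : ℕ → ℝ := fun u => ∑ y, π u y with hMdef
  have hmass_eq : ∀ u, mass (π u) = M u := fun u => tsum_fintype _
  have hM1 : 1 ≤ M 1 := by rw [← hmass_eq]; exact hmass
  have hM : ∀ u, 1 ≤ M u := by
    intro u
    cases u with
    | zero => rw [hMdef]; simp only; rw [hπ0]; exact hM1
    | succ n =>
      refine hM1.trans ?_
      exact Finset.sum_le_sum (fun y _ => hleA 1 (n+1) (by omega) y)
  have hMpos : ∀ u, 0 < M u := fun u => lt_of_lt_of_le one_pos (hM u)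
  -- normalized measure facts
  have hnmz_eq : ∀ u (y : V), nmz (π u) y = π u y / M u := by
    intro u y
    unfold nmz
    rw [hmass_eq]
  have hnmz_pos : ∀ u (y : V), 0 < nmz (π u) y := by
    intro u y
    rw [hnmz_eq]
    exact div_pos (hposA u y) (hMpos u)
  have hnmz_sum : ∀ u, ∑ y, nmz (π u) y = 1 := by
    intro u
    simp_rw [hnmz_eq]
    rw [← Finset.sum_div, div_self (hMpos u).ne']
  have hnmz_stat : ∀ u, 1 ≤ u → ∀ y, ∑ x, nmz (π u) x * K u x y = nmz (π u) y := by
    intro u hu y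
    simp_rw [hnmz_eq, div_mul_eq_mul_div, ← Finset.sum_div]
    rw [hstatF u hu y]
  -- minorization of normalized measures
  set E : ℝ := C*(1+1/Tr) with hEdef
  have hE0 : 0 < E := by positivity
  have hmin : ∀ τ, 1 ≤ τ → τ ≤ T → ∀ y : V, E^(-(2*D):ℝ) ≤ nmz (π τ) y := by
    intro τ h1 h2 y
    exact min_bound (hMk τ h1) (hnmz_pos τ) (hnmz_sum τ) (hnmz_stat τ h1)
      hC hD hTr (hNash τ h1 h2) y
  have hminr : ∀ y : V, E^(-(2*D):ℝ) ≤ nmz (π r) y := by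
    intro y
    cases r with
    | zero => rw [hπ0]; exact hmin 1 le_rfl hT y
    | succ n => exact hmin (n+1) (by omega) (by omega) y
  have hπr_lb : ∀ y : V, E^(-(2*D):ℝ) ≤ π r y := by
    intro y
    refine (hminr y).trans ?_
    rw [hnmz_eq]
    rw [div_le_iff₀ (hMpos r)]
    have h1 := mul_le_mul_of_nonneg_left (hM r) (hposA r y).le
    rw [mul_one] at h1
    exact h1
  -- set up
  set s : ℕ := t - r with hsdef
  have hrs : r + s = t := by omega
  have hsT : (s:ℝ) ≤ Tr := by
    have h' : s ≤ T := by omega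
    rw [hTrdef]
    exact_mod_cast h'
  have hcast : (t:ℝ) - r + 1 = (s:ℝ) + 1 := by
    have : ((s:ℕ):ℝ) = (t:ℝ) - r := by
      rw [hsdef]
      push_cast [Nat.cast_sub hrt]
      ring
    rw [this]
  set A : ℝ := 4*C*((1+1/Tr)*(1+m)) with hAdef
  have hA0 : 0 < A := by positivity
  set R : ℝ := 2 * ((A / ((t:ℝ) - r + 1)) ^ (D:ℝ)) * Real.sqrt (mass (π t))
      * l2norm (nmz (π t)) f with hRdef
  have hs1pos : (0:ℝ) < (s:ℝ) + 1 := by positivity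
  have hXpos : (0:ℝ) < A/((s:ℝ)+1) := by positivity
  have hR : R = 2 * ((A / ((s:ℝ)+1)) ^ (D:ℝ)) * Real.sqrt (mass (π t))
      * l2norm (nmz (π t)) f := by rw [hRdef, hcast]
  show (⨆ x : V, |Kst K r t f x - integral (nmz (π r)) (Kst K r t f)|) ≤ R
  apply ciSup_le
  intro x
  -- the evolved signed measure
  set μ0 : V → ℝ := fun y => delta x y - nmz (π r) y with hμ0def
  set σ : ℕ → V → ℝ := evo K r μ0 with hσdef
  have hσsucc : ∀ j, σ (j+1) = actMeas (K (r+1+j)) (σ j) := fun j => rfl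
  have hσ0 : ∀ y : V, σ 0 y = delta x y - nmz (π r) y := fun y => rfl
  have hdeltasum : ∀ g : V → ℝ, ∑ y, delta x y * g y = g x := by
    intro g
    unfold delta
    rw [Finset.sum_eq_single x]
    · simp
    · intro b _ hb; simp [hb]
    · intro h; exact absurd (Finset.mem_univ x) h
  have hrepr : Kst K r t f x - integral (nmz (π r)) (Kst K r t f)
      = ∑ y, σ s y * f y := by
    have h1 : Kst K r t f x - integral (nmz (π r)) (Kst K r t f)
        = ∑ y, μ0 y * Kst K r t f y := by
      rw [hμ0def]
      simp only [sub_mul]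
      rw [Finset.sum_sub_distrib, hdeltasum]
      unfold integral
      rw [tsum_fintype]
    rw [h1, hσdef, evo_pairing K r t μ0 f s (by omega), hrs, Kst_self]
  clear_value σ
  clear hσdef
  set Λ : ℕ → ℝ := fun j => ∑ y, |σ j y| with hΛdef
  set N : ℕ → ℝ := fun j => ∑ y, (σ j y)^2 / π (r+j) y with hNdef
  have hΛnn : ∀ j, 0 ≤ Λ j := fun j => Finset.sum_nonneg (fun y _ => abs_nonneg _)
  have hΛmono : ∀ j, Λ (j+1) ≤ Λ j := by
    intro j
    rw [hΛdef]
    simp only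
    rw [hσsucc j]
    exact l1_contraction (hMk (r+1+j) (by omega)) (σ j)
  have hΛle : ∀ j, Λ j ≤ Λ 0 := by
    intro j
    induction j with
    | zero => exact le_rfl
    | succ n ih => exact (hΛmono n).trans ih
  -- basic bounds on μ0
  have hpx1 : nmz (π r) x ≤ 1 := by
    have := hnmz_sum r
    have h2 : nmz (π r) x ≤ ∑ y, nmz (π r) y :=
      Finset.single_le_sum (fun y _ => (hnmz_pos r y).le) (Finset.mem_univ x)
    linarith
  have hΛ0 : Λ 0 = 2*(1 - nmz (π r) x) := by
    rw [hΛdef]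
    simp only
    simp_rw [hσ0]
    rw [← Finset.sum_erase_add _ _ (Finset.mem_univ x)]
    have e1 : ∀ y ∈ Finset.univ.erase x, |delta x y - nmz (π r) y| = nmz (π r) y := by
      intro y hy
      have hyx : y ≠ x := Finset.ne_of_mem_erase hy
      unfold delta
      rw [if_neg hyx, abs_sub_comm, abs_of_nonneg (by linarith [hnmz_pos r y])]
      ring_nf
    rw [Finset.sum_congr rfl e1]
    have e2 : |delta x x - nmz (π r) x| = 1 - nmz (π r) x := by
      unfold delta
      rw [if_pos rfl, abs_of_nonneg (by linarith)]
    rw [e2]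
    have e3 : ∑ y ∈ Finset.univ.erase x, nmz (π r) y = 1 - nmz (π r) x := by
      have := hnmz_sum r
      rw [← Finset.sum_erase_add _ _ (Finset.mem_univ x)] at this
      linarith
    rw [e3]
    ring
  have hΛ02 : Λ 0 ≤ 2 := by
    rw [hΛ0]
    linarith only [hnmz_pos r x]
  have habs0 : ∀ y : V, |σ 0 y| ≤ Λ 0 / 2 := by
    intro y
    rw [hΛ0]
    by_cases hyx : y = x
    · rw [hσ0 y, hyx]
      unfold delta
      rw [if_pos rfl, abs_of_nonneg (by linarith [hpx1])]
      linarith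
    · rw [hσ0 y]
      unfold delta
      rw [if_neg hyx, abs_sub_comm, abs_of_nonneg (by linarith [hnmz_pos r y])]
      have : nmz (π r) y + nmz (π r) x ≤ 1 := by
        have hsub : ({y, x} : Finset V) ⊆ Finset.univ := Finset.subset_univ _
        have := Finset.sum_le_sum_of_subset_of_nonneg hsub
          (fun z _ _ => (hnmz_pos r z).le)
        rw [Finset.sum_pair hyx, hnmz_sum r] at this
        linarith
      simp only [sub_zero]
      linarith
  -- base case bound
  have hE2Dneg : (0:ℝ) < E^(-(2*D):ℝ) := Real.rpow_pos_of_pos hE0 _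
  have hinv : ∀ y : V, 1 / π r y ≤ E^(2*D:ℝ) := by
    intro y
    have h1 : 1 / π r y ≤ 1 / E^(-(2*D):ℝ) :=
      one_div_le_one_div_of_le hE2Dneg (hπr_lb y)
    have h2 : 1/(E^(-(2*D):ℝ)) = E^(2*D:ℝ) := by
      rw [Real.rpow_neg hE0.le, one_div, inv_inv]
    rwa [h2] at h1
  have hrpow2 : ∀ u : ℝ, 0 ≤ u → u^(2:ℝ) = u * u := by
    intro u hu
    rw [show (2:ℝ) = ((2:ℕ):ℝ) by norm_num, Real.rpow_natCast]
    ring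
  have hN0 : N 0 ≤ E^(2*D:ℝ) * (Λ 0)^(2:ℝ) / 2 := by
    have e0 : N 0 = ∑ y, (σ 0 y)^2 / π r y := by
      rw [hNdef]; simp
    have step : ∀ y : V, (σ 0 y)^2 / π r y ≤ (|σ 0 y| * (Λ 0/2)) * E^(2*D:ℝ) := by
      intro y
      rw [div_eq_mul_one_div]
      apply mul_le_mul
      · rw [← sq_abs, sq]
        exact mul_le_mul_of_nonneg_left (habs0 y) (abs_nonneg _)
      · exact hinv y
      · exact one_div_nonneg.mpr (hposA r y).le
      · exact mul_nonneg (abs_nonneg _) (by linarith [hΛnn 0])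
    calc N 0 ≤ ∑ y, (|σ 0 y| * (Λ 0/2)) * E^(2*D:ℝ) := by
          rw [e0]; exact Finset.sum_le_sum (fun y _ => step y)
      _ = (Λ 0 * (Λ 0/2)) * E^(2*D:ℝ) := by
          rw [← Finset.sum_mul, ← Finset.sum_mul]
      _ = E^(2*D:ℝ) * (Λ 0)^(2:ℝ) / 2 := by
          rw [hrpow2 (Λ 0) (hΛnn 0)]; ring
  -- nonnegativity of the target
  have hl2f_nonneg : 0 ≤ l2norm (nmz (π t)) f := Real.sqrt_nonneg _
  have hR0 : 0 ≤ R := by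
    rw [hR]
    have h1 : (0:ℝ) ≤ (A / ((s:ℝ)+1)) ^ (D:ℝ) := Real.rpow_nonneg hXpos.le _
    have h2 : (0:ℝ) ≤ Real.sqrt (mass (π t)) := Real.sqrt_nonneg _
    positivity
  by_cases hΛ0z : Λ 0 = 0
  · -- degenerate case: σ is identically zero
    have hσs : ∀ y : V, σ s y = 0 := by
      intro y
      have h1 : Λ s ≤ 0 := hΛ0z ▸ hΛle s
      have h2 : Λ s = 0 := le_antisymm h1 (hΛnn s)
      have h3 := (Finset.sum_eq_zero_iff_of_nonneg
        (fun z (_ : z ∈ Finset.univ) => abs_nonneg (σ s z))).mp h2 y (Finset.mem_univ y)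
      exact abs_eq_zero.mp h3
    rw [hrepr]
    have : ∑ y, σ s y * f y = 0 := by
      apply Finset.sum_eq_zero
      intro y _
      rw [hσs y, zero_mul]
    rw [this, abs_zero]
    exact hR0
  -- main case
  have hL : 0 < Λ 0 := lt_of_le_of_ne (hΛnn 0) (Ne.symm hΛ0z)
  have hstep : ∀ j, j < s → N (j+1) ≤ N j ∧
      N (j+1) * (1 - 1/Tr) + (N (j+1))^((1:ℝ)+1/(2*D)) / (C * (Λ 0)^((1:ℝ)/D)) ≤ N j := by
    intro j hj
    set τ := r+1+j with hτdef
    have hτ1 : 1 ≤ τ := by omega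
    have hτT : τ ≤ T := by omega
    have hkM : IsMarkov (K τ) := hMk τ hτ1
    set w : V → ℝ := π τ with hwdef
    have hwpos : ∀ z, 0 < w z := hposA τ
    set ψ : V → ℝ := fun y => σ (j+1) y / w y with hψdef
    set φ : V → ℝ := fun z => σ j z / w z with hφdef
    set a : ℝ := ∑ z, (σ j z)^2 / w z with hadef
    set b : ℝ := ∑ y, (σ (j+1) y)^2 / w y with hbdef
    set c : ℝ := ∑ z, w z * (act (K τ) ψ z)^2 with hcdef
    have ha_nonneg : 0 ≤ a :=
      Finset.sum_nonneg (fun z _ => div_nonneg (sq_nonneg _) (hwpos z).le)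
    have hb_nonneg : 0 ≤ b :=
      Finset.sum_nonneg (fun z _ => div_nonneg (sq_nonneg _) (hwpos z).le)
    have hc_nonneg : 0 ≤ c :=
      Finset.sum_nonneg (fun z _ => mul_nonneg (hwpos z).le (sq_nonneg _))
    have hbN : N (j+1) = b := by
      rw [hNdef]
      simp only
      have h' : r+(j+1) = τ := by omega
      rw [h']
    have haw : a = ∑ z, w z * φ z^2 := by
      apply Finset.sum_congr rfl
      intro z _
      rw [hφdef]
      have hne := (hwpos z).ne'
      field_simp
    have hbw : b = ∑ y, w y * ψ y^2 := by
      apply Finset.sum_congr rfl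
      intro y _
      rw [hψdef]
      have hne := (hwpos y).ne'
      field_simp
    have hbb : b = ∑ z, w z * φ z * act (K τ) ψ z := by
      have e1 : b = ∑ y, σ (j+1) y * ψ y := by
        apply Finset.sum_congr rfl
        intro y _
        rw [hψdef]
        have hne := (hwpos y).ne'
        field_simp
      have e2 : ∑ y, σ (j+1) y * ψ y = ∑ y, actMeas (K τ) (σ j) y * ψ y := by
        apply Finset.sum_congr rfl
        intro y _
        rw [hσsucc j]
      have e3 : ∑ y, actMeas (K τ) (σ j) y * ψ y = ∑ z, σ j z * act (K τ) ψ z :=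
        fubini_pair _ _ _
      have e4 : ∑ z, σ j z * act (K τ) ψ z = ∑ z, w z * φ z * act (K τ) ψ z := by
        apply Finset.sum_congr rfl
        intro z _
        rw [hφdef]
        have hne := (hwpos z).ne'
        field_simp
      rw [e1, e2, e3, e4]
    have hCSab : b^2 ≤ a * c := by
      have cs := Finset.sum_mul_sq_le_sq_mul_sq Finset.univ
        (fun z => Real.sqrt (w z) * φ z) (fun z => Real.sqrt (w z) * act (K τ) ψ z)
      have e1 : ∀ z : V, (Real.sqrt (w z) * φ z) * (Real.sqrt (w z) * act (K τ) ψ z)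
          = w z * φ z * act (K τ) ψ z := by
        intro z
        rw [mul_mul_mul_comm, Real.mul_self_sqrt (hwpos z).le]
        ring
      have e2 : ∀ z : V, (Real.sqrt (w z) * φ z)^2 = w z * φ z^2 := by
        intro z
        rw [mul_pow, Real.sq_sqrt (hwpos z).le]
      have e3 : ∀ z : V, (Real.sqrt (w z) * act (K τ) ψ z)^2 = w z * (act (K τ) ψ z)^2 := by
        intro z
        rw [mul_pow, Real.sq_sqrt (hwpos z).le]
      simp only [e1, e2, e3] at cs
      rw [← haw, ← hbb] at cs
      exact cs
    have hcb : c ≤ b := by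
      rw [hbw]
      exact l2_contraction hkM (fun z => (hwpos z).le) (hstatF τ hτ1) ψ
    have hba : b ≤ a := by
      by_contra hcon
      push_neg at hcon
      have hbpos : 0 < b := lt_of_le_of_lt ha_nonneg hcon
      have h1 : a*c ≤ a*b := mul_le_mul_of_nonneg_left hcb ha_nonneg
      have h2 : b*b ≤ a*b := by
        calc b*b = b^2 := (sq b).symm
          _ ≤ a*c := hCSab
          _ ≤ a*b := h1
      exact absurd ((mul_le_mul_iff_left₀ hbpos).mp h2) (not_le.mpr hcon)
    have haN : a ≤ N j := by
      rw [hNdef]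
      apply Finset.sum_le_sum
      intro z _
      have h1 : π (r+j) z ≤ w z := by
        have := hmonoA (r+j) z
        have h' : r+j+1 = τ := by omega
        rwa [h'] at this
      exact div_le_div_of_nonneg_left (sq_nonneg _) (hposA (r+j) z) h1
    have hbc_ab : b - c ≤ a - b := by
      rcases eq_or_lt_of_le ha_nonneg with h0 | hapos
      · have hb0 : b = 0 := le_antisymm (h0 ▸ hba) hb_nonneg
        rw [hb0, ← h0]
        linarith [hc_nonneg]
      · have e1 : a*(b-c) ≤ a*(a-b) := by
          have k1 : (0:ℝ) ≤ (a-b)^2 := sq_nonneg _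
          have k2 : (a-b)^2 = a^2 - 2*(a*b) + b^2 := by ring
          have k3 : b^2 ≤ a*c := hCSab
          have k4 : a*(b-c) = a*b - a*c := by ring
          have k5 : a*(a-b) = a^2 - a*b := by ring
          linarith only [k1, k2, k3, k4, k5]
        exact (mul_le_mul_iff_right₀ hapos).mp e1
    -- Nash inequality at time τ
    have hNashψ := hNash τ hτ1 hτT ψ
    have hMτpos : 0 < M τ := hMpos τ
    have hsum_l2 : ∑ y, nmz (π τ) y * ψ y^2 = b / M τ := by
      have e : ∀ y : V, nmz (π τ) y * ψ y^2 = ((σ (j+1) y)^2 / w y) / M τ := by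
        intro y
        rw [hnmz_eq, hψdef]
        have := (hwpos y).ne'
        field_simp
        ring
      simp_rw [e]
      rw [← Finset.sum_div]
    have hl2ψ : l2norm (nmz (π τ)) ψ = Real.sqrt (b / M τ) := by
      unfold l2norm
      rw [tsum_fintype]
      rw [hsum_l2]
    have hdirψ : dirichlet (Qker (nmz (π τ)) (K τ)) (nmz (π τ)) ψ = (b - c) / M τ := by
      rw [dirichlet_eq hkM (hnmz_pos τ) (hnmz_stat τ hτ1) ψ]
      rw [hsum_l2]
      have e : ∀ y : V, nmz (π τ) y * (act (K τ) ψ y)^2 = (w y * (act (K τ) ψ y)^2) / M τ := by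
        intro y
        rw [hnmz_eq]
        have hne := hMτpos.ne'
        field_simp; rw [hwdef]; ring
      simp_rw [e]
      rw [← Finset.sum_div, ← hcdef]
      ring
    have hl1ψ : l1norm (nmz (π τ)) ψ = Λ (j+1) / M τ := by
      unfold l1norm
      rw [tsum_fintype]
      have e : ∀ y : V, nmz (π τ) y * |ψ y| = |σ (j+1) y| / M τ := by
        intro y
        rw [hnmz_eq, hψdef, abs_div, abs_of_pos (hwpos y)]
        have hne := (hwpos y).ne'
        have hne2 := hMτpos.ne'
        field_simp
        rw [hwdef]
        ring
      simp_rw [e]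
      rw [← Finset.sum_div]
    set q : ℝ := (1:ℝ) + 1/(2*D) with hqdef
    have hsqrt_pow : (Real.sqrt (b / M τ)) ^ ((2:ℝ) + 1/D) = (b / M τ)^q := by
      rw [Real.sqrt_eq_rpow, ← Real.rpow_mul (by positivity)]
      congr 1
      rw [hqdef]
      field_simp
    have hsq2 : (Real.sqrt (b / M τ)) ^ (2:ℕ) = b / M τ :=
      Real.sq_sqrt (by positivity)
    rw [hl2ψ, hdirψ, hl1ψ, hsqrt_pow, hsq2] at hNashψ
    -- unnormalize
    have hMq : (M τ)^q = M τ * ((M τ)^((1:ℝ)/D) * (M τ)^(-(1/(2*D)):ℝ)) := by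
      have e : q = (1:ℝ) + ((1:ℝ)/D + (-(1/(2*D)):ℝ)) := by
        rw [hqdef]; field_simp; ring
      rw [e, Real.rpow_add hMτpos, Real.rpow_add hMτpos, Real.rpow_one]
    have hMqpos : (0:ℝ) < (M τ)^q := Real.rpow_pos_of_pos hMτpos _
    have key_un : b^q ≤ C * (b - c + b/Tr) * (Λ (j+1))^((1:ℝ)/D) := by
      have h1 : b^q = (b/M τ)^q * (M τ)^q := by
        rw [← Real.mul_rpow (by positivity) hMτpos.le, div_mul_cancel₀ _ hMτpos.ne']
      have h2 : (b/M τ)^q * (M τ)^q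
          ≤ (C * ((b - c)/M τ + 1/Tr * (b/M τ)) * (Λ (j+1)/M τ)^((1:ℝ)/D)) * (M τ)^q :=
        mul_le_mul_of_nonneg_right hNashψ hMqpos.le
      have h3 : (C * ((b - c)/M τ + 1/Tr * (b/M τ)) * (Λ (j+1)/M τ)^((1:ℝ)/D)) * (M τ)^q
          = (C * (b - c + b/Tr) * (Λ (j+1))^((1:ℝ)/D)) * (M τ)^(-(1/(2*D)):ℝ) := by
        rw [Real.div_rpow (hΛnn (j+1)) hMτpos.le, hMq]
        have hMD : (M τ)^((1:ℝ)/D) ≠ 0 := ne_of_gt (Real.rpow_pos_of_pos hMτpos _)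
        field_simp
      have h4 : (C * (b - c + b/Tr) * (Λ (j+1))^((1:ℝ)/D)) * (M τ)^(-(1/(2*D)):ℝ)
          ≤ C * (b - c + b/Tr) * (Λ (j+1))^((1:ℝ)/D) := by
        have hfac : 0 ≤ C * (b - c + b/Tr) * (Λ (j+1))^((1:ℝ)/D) := by
          apply mul_nonneg
          apply mul_nonneg hC.le
          · have h' : 0 ≤ b/Tr := div_nonneg hb_nonneg hTr0.le
            linarith only [hcb, h']
          · exact Real.rpow_nonneg (hΛnn (j+1)) _
        have hle1 : (M τ)^(-(1/(2*D)):ℝ) ≤ 1 :=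
          Real.rpow_le_one_of_one_le_of_nonpos (hM τ) (neg_nonpos.mpr (by positivity))
        calc (C * (b - c + b/Tr) * (Λ (j+1))^((1:ℝ)/D)) * (M τ)^(-(1/(2*D)):ℝ)
            ≤ (C * (b - c + b/Tr) * (Λ (j+1))^((1:ℝ)/D)) * 1 :=
              mul_le_mul_of_nonneg_left hle1 hfac
          _ = C * (b - c + b/Tr) * (Λ (j+1))^((1:ℝ)/D) := mul_one _
      calc b^q = (b/M τ)^q * (M τ)^q := h1
        _ ≤ _ := h2
        _ = _ := h3
        _ ≤ _ := h4
    have key_un2 : b^q ≤ C * (a - b + b/Tr) * (Λ 0)^((1:ℝ)/D) := by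
      refine key_un.trans ?_
      apply mul_le_mul
      · apply mul_le_mul_of_nonneg_left _ hC.le
        linarith only [hbc_ab]
      · exact Real.rpow_le_rpow (hΛnn (j+1)) (hΛle (j+1)) (by positivity)
      · exact Real.rpow_nonneg (hΛnn (j+1)) _
      · apply mul_nonneg hC.le
        have h' : 0 ≤ b/Tr := div_nonneg hb_nonneg hTr0.le
        linarith only [hba, h']
    have hCΛpos : 0 < C * (Λ 0)^((1:ℝ)/D) :=
      mul_pos hC (Real.rpow_pos_of_pos hL _)
    have hfinal : b * (1 - 1/Tr) + b^q / (C * (Λ 0)^((1:ℝ)/D)) ≤ a := by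
      have hdiv : b^q / (C * (Λ 0)^((1:ℝ)/D)) ≤ a - b + b/Tr := by
        rw [div_le_iff₀ hCΛpos]
        calc b^q ≤ C * (a - b + b/Tr) * (Λ 0)^((1:ℝ)/D) := key_un2
          _ = (a - b + b/Tr) * (C * (Λ 0)^((1:ℝ)/D)) := by ring
      have e : b * (1 - 1/Tr) = b - b/Tr := by ring
      rw [e]
      linarith only [hdiv]
    constructor
    · rw [hbN]; exact hba.trans haN
    · rw [hbN]
      exact hfinal.trans haN
  -- apply the iteration lemma
  have hiter := nash_iter Tr C D (Λ 0) m hTr hC hD hL hm1 hm4 s hsT N hN0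
    (fun j hj => (hstep j hj).1) (fun j hj => (hstep j hj).2)
  -- conclude
  have hNs4 : N s ≤ (A/((s:ℝ)+1))^(2*D:ℝ) * 4 := by
    have hΛsq : (Λ 0)^(2:ℝ) ≤ 4 := by
      rw [hrpow2 (Λ 0) (hΛnn 0)]
      have h1 := mul_le_mul hΛ02 hΛ02 (hΛnn 0) (by norm_num : (0:ℝ) ≤ 2)
      linarith only [h1]
    have hXnn : (0:ℝ) ≤ (A/((s:ℝ)+1))^(2*D:ℝ) := Real.rpow_nonneg hXpos.le _
    calc N s ≤ (A/((s:ℝ)+1))^(2*D:ℝ) * (Λ 0)^(2:ℝ) := by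
          rw [hAdef]; exact hiter
      _ ≤ (A/((s:ℝ)+1))^(2*D:ℝ) * 4 := mul_le_mul_of_nonneg_left hΛsq hXnn
  have hsqrtNs : Real.sqrt (N s) ≤ 2*(A/((s:ℝ)+1))^(D:ℝ) := by
    have h1 : Real.sqrt (N s) ≤ Real.sqrt ((A/((s:ℝ)+1))^(2*D:ℝ) * 4) :=
      Real.sqrt_le_sqrt hNs4
    refine h1.trans_eq ?_
    rw [Real.sqrt_mul (Real.rpow_nonneg hXpos.le _) 4]
    have e1 : Real.sqrt ((A/((s:ℝ)+1))^(2*D:ℝ)) = (A/((s:ℝ)+1))^(D:ℝ) := by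
      rw [Real.sqrt_eq_rpow, ← Real.rpow_mul hXpos.le]
      congr 1
      ring
    have e2 : Real.sqrt 4 = 2 := by
      rw [show (4:ℝ) = 2^2 by norm_num, Real.sqrt_sq (by norm_num : (0:ℝ) ≤ 2)]
    rw [e1, e2]
    ring
  have hNs_eq : N s = ∑ y, (σ s y)^2 / π t y := by
    rw [hNdef]
    simp only
    rw [hrs]
  have hCSfinal : |∑ y, σ s y * f y|
      ≤ Real.sqrt (N s) * Real.sqrt (∑ y, π t y * f y^2) := by
    have cs := Finset.sum_mul_sq_le_sq_mul_sq Finset.univ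
      (fun y => σ s y / Real.sqrt (π t y)) (fun y => Real.sqrt (π t y) * f y)
    have e1 : ∀ y : V, (σ s y / Real.sqrt (π t y)) * (Real.sqrt (π t y) * f y)
        = σ s y * f y := by
      intro y
      have hne : Real.sqrt (π t y) ≠ 0 :=
        ne_of_gt (Real.sqrt_pos.mpr (hposA t y))
      field_simp
    have e2 : ∀ y : V, (σ s y / Real.sqrt (π t y))^2 = (σ s y)^2 / π t y := by
      intro y
      rw [div_pow, Real.sq_sqrt (hposA t y).le]
    have e3 : ∀ y : V, (Real.sqrt (π t y) * f y)^2 = π t y * f y^2 := by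
      intro y
      rw [mul_pow, Real.sq_sqrt (hposA t y).le]
    simp only [e1, e2, e3] at cs
    rw [← hNs_eq] at cs
    have habs : |∑ y, σ s y * f y| = Real.sqrt ((∑ y, σ s y * f y)^2) :=
      (Real.sqrt_sq_eq_abs _).symm
    rw [habs]
    have hNs_nonneg : 0 ≤ N s := by
      rw [hNs_eq]
      exact Finset.sum_nonneg (fun y _ => div_nonneg (sq_nonneg _) (hposA t y).le)
    calc Real.sqrt ((∑ y, σ s y * f y)^2)
        ≤ Real.sqrt (N s * ∑ y, π t y * f y^2) := Real.sqrt_le_sqrt cs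
      _ = Real.sqrt (N s) * Real.sqrt (∑ y, π t y * f y^2) := by
          rw [Real.sqrt_mul hNs_nonneg _]
  have hl2f : Real.sqrt (∑ y, π t y * f y^2)
      = Real.sqrt (mass (π t)) * l2norm (nmz (π t)) f := by
    unfold l2norm
    rw [tsum_fintype, hmass_eq]
    have e : ∀ y : V, nmz (π t) y * f y^2 = (π t y * f y^2)/M t := by
      intro y
      rw [hnmz_eq]
      have hne := (hMpos t).ne'
      field_simp
    simp_rw [e]
    rw [← Finset.sum_div]
    rw [Real.sqrt_div (Finset.sum_nonneg (fun y _ => mul_nonneg (hposA t y).le (sq_nonneg _)))]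
    rw [mul_div_cancel₀]
    exact ne_of_gt (Real.sqrt_pos.mpr (hMpos t))
  calc |Kst K r t f x - integral (nmz (π r)) (Kst K r t f)|
      = |∑ y, σ s y * f y| := by rw [hrepr]
    _ ≤ Real.sqrt (N s) * Real.sqrt (∑ y, π t y * f y^2) := hCSfinal
    _ ≤ (2*(A/((s:ℝ)+1))^(D:ℝ)) * Real.sqrt (∑ y, π t y * f y^2) :=
        mul_le_mul_of_nonneg_right hsqrtNs (Real.sqrt_nonneg _)
    _ = R := by
        rw [hl2f, hR]
        ring
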